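/- Fix symbols x = A and its complement y = T, and integers m > k > 0. Suppose c ∈ D^n is such that every contiguous subsequence of length m of c contains at least k occurrences of A and at most k−1 occurrences of T. Then c is m-SSA. -/
import Mathlib


inductive Base : Type
  | A | T | C | G
deriving DecidableEq, Repr

open Base

def bcompl : Base → Base
  | A => T
  | T => A
  | C => G
  | G => C

/-- Reverse-complement of a DNA word. -/
def RC (w : List Base) : List Base := w.reverse.map bcompl

/-- The contiguous factor of `x` starting at index `i` of length `k`. -/
def factor (x : List Base) (i k : ℕ) : List Base := (x.drop i).take k

/-- `x` is `m`-SSA: for all `k ≥ m` there is no pair of non-overlapping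
contiguous factors of length `k`, one the reverse-complement of the other. -/
def SSA (m : ℕ) (x : List Base) : Prop :=
  ∀ k, m ≤ k → ∀ i j, i + k ≤ x.length → j + k ≤ x.length →
    (i + k ≤ j ∨ j + k ≤ i) → factor x i k ≠ RC (factor x j k)

lemma count_A_RC (w : List Base) : (RC w).count Base.A = w.count Base.T := by
  unfold RC
  rw [← List.count_reverse (l := w)]
  generalize w.reverse = l
  induction l with
  | nil => rfl
  | cons b l ih =>
    cases b <;> simp [List.count_cons, ih, bcompl]

lemma take_RC (w : List Base) (m : ℕ) (hm : m ≤ w.length) :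
    (RC w).take m = RC (w.drop (w.length - m)) := by
  unfold RC
  rw [← List.map_take, List.reverse_drop]
  congr 2
  omega

theorem stmt2 (n m k : ℕ) (hk : 0 < k) (hmk : k < m) (c : List Base)
    (hlen : c.length = n)
    (hA : ∀ i, i + m ≤ c.length → k ≤ (factor c i m).count Base.A)
    (hT : ∀ i, i + m ≤ c.length → (factor c i m).count Base.T ≤ k - 1) :
    SSA m c := by
  intro ℓ hmℓ i j hi hj _ heq
  -- length of factor c j ℓ is ℓ
  have hlenj : (factor c j ℓ).length = ℓ := by
    simp [factor]
    omega
  -- prefix of length m of both sides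
  have h1 : factor c i m = (factor c i ℓ).take m := by
    simp [factor, List.take_take, Nat.min_eq_left hmℓ]
  have h2 : (RC (factor c j ℓ)).take m = RC (factor c (j + (ℓ - m)) m) := by
    rw [take_RC _ _ (by rw [hlenj]; omega), hlenj]
    congr 1
    simp [factor, List.drop_take]
    omega
  have hAc := hA i (by omega)
  have hTc := hT (j + (ℓ - m)) (by omega)
  rw [h1, heq, h2] at hAc
  rw [count_A_RC] at hAc
  omega
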